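/- Let n ≥ 3 and q with 1 ≤ q ≤ n. In ℝⁿ, set u_i = −e_i for 0 ≤ i ≤ q where e₀ = −(e₁+⋯+eₙ), and define maximal cones σ_i = Cone(e₀,…,ê_i,…,eₙ) for q+1 ≤ i ≤ n and τ_{ij} = Cone(u_i, e₀,…,ê_i,…,ê_j,…,eₙ) for 0 ≤ i ≤ q, 0 ≤ j ≤ n, i ≠ j. Then: (1) for any ray generator v ∈ {u₀,…,u_q, e₀,…,eₙ} with v ≠ u_i, there exists a maximal cone containing both e_i and v (for each 0 ≤ i ≤ n with the convention that u_i is only defined for i ≤ q); (2) for 0 ≤ i < j ≤ q, no maximal cone contains both u_i and u_j. -/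
import Mathlib


/-- The convex cone (set of nonnegative real linear combinations) generated by `S`. -/
def coneOf {n : ℕ} (S : Set (Fin n → ℝ)) : Set (Fin n → ℝ) :=
  {x | ∃ (t : Finset (Fin n → ℝ)) (c : (Fin n → ℝ) → ℝ),
    ↑t ⊆ S ∧ (∀ y ∈ t, 0 ≤ c y) ∧ x = ∑ y ∈ t, c y • y}

lemma mem_coneOf' {n : ℕ} {S : Set (Fin n → ℝ)} {y} (hy : y ∈ S) : y ∈ coneOf S := by
  refine ⟨{y}, fun _ => 1, by simpa, by simp, by simp⟩

lemma coneOf_nonneg' {n : ℕ} {S : Set (Fin n → ℝ)} (c : Fin n → ℝ)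
    (h : ∀ y ∈ S, 0 ≤ ∑ k, c k * y k) : ∀ x ∈ coneOf S, 0 ≤ ∑ k, c k * x k := by
  rintro x ⟨t, co, hts, hc, rfl⟩
  have key : ∑ k, c k * (∑ y ∈ t, co y • y) k = ∑ y ∈ t, co y * ∑ k, c k * y k := by
    simp only [Finset.sum_apply, Pi.smul_apply, smul_eq_mul, Finset.mul_sum]
    rw [Finset.sum_comm]
    exact Finset.sum_congr rfl fun y _ => Finset.sum_congr rfl fun k _ => by ring
  rw [key]
  exact Finset.sum_nonneg fun y hy => mul_nonneg (hc y hy) (h y (hts hy))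

lemma exists_ne3' {N : ℕ} (h : 4 ≤ N) (a b c : Fin N) : ∃ d, d ≠ a ∧ d ≠ b ∧ d ≠ c := by
  by_contra h'
  push_neg at h'
  have hsub : (Finset.univ : Finset (Fin N)) ⊆ {a, b, c} := by
    intro d _
    simp only [Finset.mem_insert, Finset.mem_singleton]
    by_cases h1 : d = a
    · exact Or.inl h1
    · by_cases h2 : d = b
      · exact Or.inr (Or.inl h2)
      · exact Or.inr (Or.inr (h' d h1 h2))
  have h1 := Finset.card_le_card hsub
  have h2 : ({a, b, c} : Finset (Fin N)).card ≤ 3 := by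
    refine le_trans (Finset.card_insert_le _ _) ?_
    have := Finset.card_insert_le b ({c} : Finset (Fin N))
    simp at this ⊢
    omega
  simp [Finset.card_univ] at h1
  omega

lemma eval_aux' {n : ℕ} (E : Fin (n+1) → Fin n → ℝ)
    (hE0 : E 0 = -∑ k, Pi.single k 1)
    (hE : ∀ j : Fin n, E j.succ = Pi.single j 1)
    (f : Fin (n + 1) → ℝ) (hf : ∑ m, f m = 0) (m : Fin (n+1)) :
    ∑ k : Fin n, f k.succ * E m k = f m := by
  induction m using Fin.cases with
  | zero =>
    rw [hE0]
    have h1 : ∀ k : Fin n, (-∑ j, Pi.single j (1:ℝ)) k = -1 := by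
      intro k; simp [Finset.sum_apply, Pi.single_apply]
    simp only [h1]
    rw [Fin.sum_univ_succ] at hf
    have : ∑ k : Fin n, f k.succ * (-1) = -∑ k : Fin n, f k.succ := by
      simp [Finset.sum_neg_distrib]
    rw [this]; linarith
  | succ j =>
    rw [hE j]
    simp [Pi.single_apply, mul_ite]

lemma not_mem_cone' {n : ℕ} (E : Fin (n+1) → Fin n → ℝ)
    (hE0 : E 0 = -∑ k, Pi.single k 1)
    (hE : ∀ j : Fin n, E j.succ = Pi.single j 1)
    (p t : Fin (n+1)) (hpt : p ≠ t) (S : Set (Fin n → ℝ))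
    (hS : ∀ y ∈ S, (∃ m, m ≠ t ∧ y = E m) ∨ (∃ m, m ≠ p ∧ y = -E m)) :
    -E p ∉ coneOf S := by
  intro hmem
  set f : Fin (n+1) → ℝ := fun m => (if m = p then (1:ℝ) else 0) - (if m = t then 1 else 0)
    with hfdef
  have hf : ∑ m, f m = 0 := by
    simp [hfdef, Finset.sum_sub_distrib]
  have heval := eval_aux' E hE0 hE f hf
  have hneg : ∀ m : Fin (n+1), ∑ k : Fin n, f k.succ * (-E m) k = -f m := by
    intro m
    have : ∑ k : Fin n, f k.succ * (-E m) k = -∑ k : Fin n, f k.succ * E m k := by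
      simp [Pi.neg_apply, mul_neg]
    rw [this, heval m]
  have h0 := coneOf_nonneg' (fun k => f k.succ) ?_ (-E p) hmem
  · have h1 : ∑ k : Fin n, f k.succ * (-E p) k = -1 := by
      rw [hneg p]; simp [hfdef, hpt]
    rw [h1] at h0; linarith
  · intro y hy
    rcases hS y hy with ⟨m, hmt, rfl⟩ | ⟨m, hmp, rfl⟩
    · rw [heval m]
      simp only [hfdef, if_neg hmt]
      split_ifs <;> norm_num
    · rw [hneg m]
      simp only [hfdef, if_neg hmp]
      split_ifs <;> norm_num

theorem stmt_18 (n q : ℕ) (hn : 3 ≤ n) (hq : 1 ≤ q) (hqn : q ≤ n)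
    (E : Fin (n + 1) → Fin n → ℝ)
    (hE0 : E 0 = -∑ k, Pi.single k 1)
    (hE : ∀ j : Fin n, E j.succ = Pi.single j 1)
    (isMax : Set (Fin n → ℝ) → Prop)
    (hisMax : ∀ C, isMax C ↔
      (∃ i : Fin (n + 1), q + 1 ≤ (i : ℕ) ∧
        C = coneOf {v | ∃ j, j ≠ i ∧ v = E j}) ∨
      (∃ i j : Fin (n + 1), (i : ℕ) ≤ q ∧ i ≠ j ∧
        C = coneOf ({-E i} ∪ {v | ∃ k, k ≠ i ∧ k ≠ j ∧ v = E k}))) :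
    (∀ i : Fin (n + 1), ∀ v : Fin n → ℝ,
      v ∈ ({w | ∃ k : Fin (n + 1), (k : ℕ) ≤ q ∧ w = -E k} ∪ Set.range E) →
      v ≠ -E i → ∃ C, isMax C ∧ E i ∈ C ∧ v ∈ C) ∧
    (∀ i j : Fin (n + 1), (i : ℕ) ≤ q → (j : ℕ) ≤ q → i ≠ j →
      ∀ C, isMax C → ¬ (-E i ∈ C ∧ -E j ∈ C)) := by
  have h4 : 4 ≤ n + 1 := by omega
  constructor
  · intro i v hv hvi
    rcases hv with ⟨k, hkq, rfl⟩ | ⟨k, rfl⟩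
    · -- v = -E k with k ≤ q, k ≠ i
      have hki : k ≠ i := by rintro rfl; exact hvi rfl
      obtain ⟨b, hbi, hbk, -⟩ := exists_ne3' h4 i k k
      refine ⟨_, (hisMax _).2 (Or.inr ⟨k, b, hkq, (Ne.symm hbk), rfl⟩), ?_, ?_⟩
      · exact mem_coneOf' (Or.inr ⟨i, hki.symm, (Ne.symm hbi), rfl⟩)
      · exact mem_coneOf' (Or.inl rfl)
    · -- v = E k
      obtain ⟨a, hai, hak, -⟩ := exists_ne3' h4 i k k
      by_cases ha : (a : ℕ) ≤ q
      · obtain ⟨b, hba, hbi, hbk⟩ := exists_ne3' h4 a i k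
        refine ⟨_, (hisMax _).2 (Or.inr ⟨a, b, ha, (Ne.symm hba), rfl⟩), ?_, ?_⟩
        · exact mem_coneOf' (Or.inr ⟨i, (Ne.symm hai), (Ne.symm hbi), rfl⟩)
        · exact mem_coneOf' (Or.inr ⟨k, (Ne.symm hak), (Ne.symm hbk), rfl⟩)
      · refine ⟨_, (hisMax _).2 (Or.inl ⟨a, by omega, rfl⟩), ?_, ?_⟩
        · exact mem_coneOf' ⟨i, (Ne.symm hai), rfl⟩
        · exact mem_coneOf' ⟨k, (Ne.symm hak), rfl⟩
  · intro i j hiq hjq hij C hC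
    rintro ⟨hiC, hjC⟩
    rcases (hisMax C).1 hC with ⟨a, haq, rfl⟩ | ⟨a, b, haq, hab, rfl⟩
    · -- first type: a ≥ q+1, so i ≠ a
      have hia : i ≠ a := by intro h; rw [h] at hiq; omega
      refine not_mem_cone' E hE0 hE i a hia _ ?_ hiC
      rintro y ⟨m, hma, rfl⟩
      exact Or.inl ⟨m, hma, rfl⟩
    · -- second type: pick p ∈ {i,j} with p ≠ a
      obtain ⟨p, hpa, hpC⟩ : ∃ p, p ≠ a ∧ -E p ∈ coneOf ({-E a} ∪
          {v | ∃ k, k ≠ a ∧ k ≠ b ∧ v = E k}) := by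
        by_cases hia : i = a
        · exact ⟨j, by rw [← hia]; exact (Ne.symm hij), hjC⟩
        · exact ⟨i, hia, hiC⟩
      set t : Fin (n+1) := if p = b then a else b with htdef
      have hpt : p ≠ t := by
        rw [htdef]
        split_ifs with hpb
        · exact hpa
        · exact hpb
      refine not_mem_cone' E hE0 hE p t hpt _ ?_ hpC
      rintro y (rfl | ⟨m, hma, hmb, rfl⟩)
      · exact Or.inr ⟨a, Ne.symm hpa, rfl⟩
      · refine Or.inl ⟨m, ?_, rfl⟩
        by_cases hpb : p = b
        · simpa [htdef, hpb] using hma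
        · simpa [htdef, hpb] using hmb
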